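/- arXiv:2212.02866 — 4 statements merged into one kernel-verified Lean document; each statement's English description precedes it below -/
import Mathlib

section
/- Let K ⊂ ℝⁿ be a convex body with 0 in its interior and let a, b > 0. Then (2π)^{−n/2} ∫_{ℝⁿ} e^{−½ b ‖x‖_K²} e^{−½ a |x|²} dx = (1/|B₂ⁿ|) ∫_K b (b + a|x|²)^{−(n+2)/2} dx. -/
/-!
Write `exp (-b g² / 2) = ∫_{t > g} b t exp (-b t² / 2) dt` with `g = ‖x‖_K`. By Tonelli the
`x`-integral then runs over the level set `{‖·‖_K < t} = t • int K`, and rescaling turns it into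
`t ^ n` times an integral over `K`. Swapping back leaves, for each `y ∈ K`, the Gaussian moment
`∫₀^∞ b t^{n+1} exp (-(b + a|y|²) t² / 2) dt = 2^{n/2} Γ(n/2 + 1) b (b + a|y|²)^{-(n+2)/2}`.
The constant `2^{n/2} Γ(n/2 + 1)` equals `(2π)^{n/2} / |B₂ⁿ|`: this is the same identity for
`K = B₂ⁿ` and `a = 0`, where the left side is the Gaussian integral.
-/

open MeasureTheory Real Set Module Filter Topology
open scoped ENNReal

theorem lintegral_Ioi_mul_exp_neg_mul_sq_div_two {b c : ℝ} (hb : 0 < b) (hc : 0 ≤ c) :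
    ∫⁻ t in Ioi c, ENNReal.ofReal (b * t * exp (-(b * t ^ 2) / 2)) =
      ENNReal.ofReal (exp (-(b * c ^ 2) / 2)) := by
  have hderiv (t : ℝ) : HasDerivAt (fun t => -exp (-(b * t ^ 2) / 2))
      (b * t * exp (-(b * t ^ 2) / 2)) t := by
    refine (((hasDerivAt_pow 2 t).const_mul b).neg.div_const 2).exp.neg.congr_deriv ?_
    simp only [Pi.neg_apply, Nat.cast_ofNat]
    ring_nf
  have hlim : Tendsto (fun t => -exp (-(b * t ^ 2) / 2)) atTop (𝓝 0) := by
    have : Tendsto (fun t : ℝ => -(b * t ^ 2) / 2) atTop atBot :=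
      (tendsto_neg_atTop_atBot.comp
        ((tendsto_pow_atTop two_ne_zero).const_mul_atTop hb)).atBot_div_const two_pos
    simpa using (tendsto_exp_atBot.comp this).neg
  have hint : IntegrableOn (fun t => b * t * exp (-(b * t ^ 2) / 2)) (Ioi c) := by
    refine ((integrable_mul_exp_neg_mul_sq (half_pos hb)).const_mul b).integrableOn.congr_fun
      (fun t _ => ?_) measurableSet_Ioi
    ring_nf
  rw [← ofReal_integral_eq_lintegral_ofReal hint
      (ae_restrict_of_forall_mem measurableSet_Ioi fun t ht => by
        have : 0 ≤ t := hc.trans (le_of_lt ht)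
        positivity),
    integral_Ioi_of_hasDerivAt_of_tendsto' (fun t _ => hderiv t) hint hlim, sub_neg_eq_add,
    zero_add]

theorem lintegral_Ioi_pow_succ_mul_exp_neg_mul_sq_div_two (n : ℕ) {c : ℝ} (hc : 0 < c) :
    ∫⁻ t in Ioi 0, ENNReal.ofReal (t ^ (n + 1) * exp (-(c * t ^ 2) / 2)) =
      ENNReal.ofReal (2 ^ ((n : ℝ) / 2) * Gamma ((n : ℝ) / 2 + 1) * c ^ (-((n : ℝ) + 2) / 2)) := by
  have hq : -1 < ((n + 1 : ℕ) : ℝ) := by push_cast; linarith [n.cast_nonneg (α := ℝ)]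
  have hform (t : ℝ) : t ^ ((n + 1 : ℕ) : ℝ) * exp (-(c / 2) * t ^ 2) =
      t ^ (n + 1) * exp (-(c * t ^ 2) / 2) := by
    rw [rpow_natCast]
    ring_nf
  have hint := integrableOn_rpow_mul_exp_neg_mul_sq (half_pos hc) hq
  have hval := integral_rpow_mul_exp_neg_mul_rpow two_pos hq (half_pos hc)
  simp only [rpow_two, hform] at hint hval
  rw [← ofReal_integral_eq_lintegral_ofReal hint
    (ae_restrict_of_forall_mem measurableSet_Ioi fun t ht => by
      have : 0 ≤ t := le_of_lt ht
      positivity), hval]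
  congr 1
  push_cast
  rw [div_rpow hc.le zero_le_two, show -((n : ℝ) + 1 + 1) / 2 = -((n / 2 + 1 : ℝ)) by ring,
    rpow_neg zero_le_two, rpow_add_one two_ne_zero, show ((n : ℝ) + 1 + 1) / 2 = n / 2 + 1 by ring,
    show -((n / 2 + 1 : ℝ)) = -((n : ℝ) + 2) / 2 by ring]
  field_simp

section AddHaar

variable {E : Type*} [NormedAddCommGroup E] [NormedSpace ℝ E] [FiniteDimensional ℝ E]
  [MeasurableSpace E] [BorelSpace E] (μ : Measure E) [μ.IsAddHaarMeasure]

theorem lintegral_eq_ofReal_pow_mul_lintegral_comp_smul (f : E → ℝ≥0∞) {R : ℝ} (hR : 0 < R) :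
    ∫⁻ x, f x ∂μ = ENNReal.ofReal (R ^ finrank ℝ E) * ∫⁻ x, f (R • x) ∂μ := by
  have hmap : ∫⁻ x, f (R • x) ∂μ = ENNReal.ofReal (R ^ finrank ℝ E)⁻¹ * ∫⁻ x, f x ∂μ := by
    rw [← abs_of_pos (inv_pos.2 (pow_pos hR _)), ← smul_eq_mul, ← lintegral_smul_measure,
      ← Measure.map_addHaar_smul μ hR.ne']
    exact (lintegral_map_equiv f (Homeomorph.smulOfNeZero R hR.ne').toMeasurableEquiv).symm
  rw [hmap, ← mul_assoc, ← ENNReal.ofReal_mul (by positivity),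
    mul_inv_cancel₀ (by positivity), ENNReal.ofReal_one, one_mul]

theorem setLIntegral_gauge_lt {s : Set E} (hs : Measurable (gauge s)) (f : E → ℝ≥0∞)
    {t : ℝ} (ht : 0 < t) :
    ∫⁻ x in {x | gauge s x < t}, f x ∂μ =
      ENNReal.ofReal (t ^ finrank ℝ E) * ∫⁻ x in {x | gauge s x < 1}, f (t • x) ∂μ := by
  rw [← lintegral_indicator (measurableSet_lt hs measurable_const),
    ← lintegral_indicator (measurableSet_lt hs measurable_const),
    lintegral_eq_ofReal_pow_mul_lintegral_comp_smul μ _ ht]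
  congr 2 with x
  simp only [indicator, mem_ofPred_eq, gauge_smul_of_nonneg ht.le, smul_eq_mul,
    mul_lt_iff_lt_one_right ht]

theorem lintegral_lintegral_Ioi_gauge_mul {s : Set E} (hs : Measurable (gauge s))
    {φ : ℝ → ℝ≥0∞} {h : E → ℝ≥0∞} (hφ : Measurable φ) (hh : Measurable h) :
    ∫⁻ x, (∫⁻ t in Ioi (gauge s x), φ t) * h x ∂μ =
      ∫⁻ t in Ioi (0 : ℝ), φ t * ENNReal.ofReal (t ^ finrank ℝ E) *
        ∫⁻ x in {x | gauge s x < 1}, h (t • x) ∂μ := by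
  have hlevel (t : ℝ) : MeasurableSet {x | gauge s x < t} := measurableSet_lt hs measurable_const
  have hslice (x : E) : (∫⁻ t in Ioi (gauge s x), φ t) * h x =
      ∫⁻ t in Ioi 0, φ t * {y | gauge s y < t}.indicator h x := by
    have hind (t : ℝ) : φ t * {y | gauge s y < t}.indicator h x =
        (Ioi (gauge s x)).indicator (fun t => φ t * h x) t := by
      by_cases hx : gauge s x < t <;> simp [indicator, hx]
    simp_rw [hind]
    rw [lintegral_indicator measurableSet_Ioi, Measure.restrict_restrict measurableSet_Ioi,
      Ioi_inter_Ioi, sup_eq_left.2 (gauge_nonneg x), lintegral_mul_const _ hφ]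
  have hmeas :
      Measurable (Function.uncurry fun x t => φ t * {y | gauge s y < t}.indicator h x) := by
    simp only [Function.uncurry_def, indicator, mem_ofPred_eq]
    exact (hφ.comp measurable_snd).mul <| Measurable.ite
      (measurableSet_lt (hs.comp measurable_fst) measurable_snd) (hh.comp measurable_fst)
      measurable_const
  calc ∫⁻ x, (∫⁻ t in Ioi (gauge s x), φ t) * h x ∂μ
      = ∫⁻ x, (∫⁻ t in Ioi 0, φ t * {y | gauge s y < t}.indicator h x) ∂μ :=
        lintegral_congr hslice
    _ = ∫⁻ t in Ioi 0, ∫⁻ x, φ t * {y | gauge s y < t}.indicator h x ∂μ :=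
        lintegral_lintegral_swap hmeas.aemeasurable
    _ = _ := by
        refine setLIntegral_congr_fun measurableSet_Ioi fun t (ht : 0 < t) => ?_
        rw [lintegral_const_mul _ (hh.indicator (hlevel t)), lintegral_indicator (hlevel t),
          setLIntegral_gauge_lt μ hs h ht, mul_assoc]

theorem lintegral_exp_gauge_mul_exp_norm {s : Set E} (hs : Measurable (gauge s)) {a b : ℝ}
    (ha : 0 ≤ a) (hb : 0 < b) :
    ∫⁻ x, ENNReal.ofReal (exp (-(b * gauge s x ^ 2) / 2) * exp (-(a * ‖x‖ ^ 2) / 2)) ∂μ =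
      ENNReal.ofReal (2 ^ ((finrank ℝ E : ℝ) / 2) * Gamma ((finrank ℝ E : ℝ) / 2 + 1)) *
        ∫⁻ x in {x | gauge s x < 1},
          ENNReal.ofReal (b * (b + a * ‖x‖ ^ 2) ^ (-((finrank ℝ E : ℝ) + 2) / 2)) ∂μ := by
  set d := finrank ℝ E
  calc ∫⁻ x, ENNReal.ofReal (exp (-(b * gauge s x ^ 2) / 2) * exp (-(a * ‖x‖ ^ 2) / 2)) ∂μ
      = ∫⁻ x, (∫⁻ t in Ioi (gauge s x), ENNReal.ofReal (b * t * exp (-(b * t ^ 2) / 2))) *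
          ENNReal.ofReal (exp (-(a * ‖x‖ ^ 2) / 2)) ∂μ := by
        refine lintegral_congr fun x => ?_
        rw [lintegral_Ioi_mul_exp_neg_mul_sq_div_two hb (gauge_nonneg x),
          ENNReal.ofReal_mul (exp_pos _).le]
    _ = ∫⁻ t in Ioi (0 : ℝ), ENNReal.ofReal (b * t * exp (-(b * t ^ 2) / 2)) *
          ENNReal.ofReal (t ^ d) *
          ∫⁻ x in {x | gauge s x < 1}, ENNReal.ofReal (exp (-(a * ‖t • x‖ ^ 2) / 2)) ∂μ :=
        lintegral_lintegral_Ioi_gauge_mul μ hs (by fun_prop) (by fun_prop)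
    _ = ∫⁻ t in Ioi (0 : ℝ), ∫⁻ x in {x | gauge s x < 1},
          ENNReal.ofReal (b * (t ^ (d + 1) * exp (-((b + a * ‖x‖ ^ 2) * t ^ 2) / 2))) ∂μ := by
        refine setLIntegral_congr_fun measurableSet_Ioi fun t (ht : 0 < t) => ?_
        rw [← ENNReal.ofReal_mul (by positivity), ← lintegral_const_mul' _ _ ENNReal.ofReal_ne_top]
        refine lintegral_congr fun x => ?_
        rw [← ENNReal.ofReal_mul (by positivity)]
        congr 1
        rw [norm_smul, Real.norm_eq_abs, mul_pow, sq_abs, show -((b + a * ‖x‖ ^ 2) * t ^ 2) / 2 =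
          -(b * t ^ 2) / 2 + -(a * (t ^ 2 * ‖x‖ ^ 2)) / 2 by ring, exp_add]
        ring
    _ = ∫⁻ x in {x | gauge s x < 1}, (∫⁻ t in Ioi (0 : ℝ),
          ENNReal.ofReal (b * (t ^ (d + 1) * exp (-((b + a * ‖x‖ ^ 2) * t ^ 2) / 2)))) ∂μ := by
        refine lintegral_lintegral_swap (Measurable.aemeasurable ?_)
        exact ENNReal.measurable_ofReal.comp (Continuous.measurable (by fun_prop))
    _ = _ := by
        rw [← lintegral_const_mul' _ _ ENNReal.ofReal_ne_top]
        refine lintegral_congr fun x => ?_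
        rw [lintegral_congr fun t => ENNReal.ofReal_mul hb.le,
          lintegral_const_mul' _ _ ENNReal.ofReal_ne_top,
          lintegral_Ioi_pow_succ_mul_exp_neg_mul_sq_div_two d (by positivity),
          ← ENNReal.ofReal_mul hb.le, ← ENNReal.ofReal_mul (by positivity)]
        congr 1
        ring

theorem integral_exp_gauge_mul_exp_norm {K : Set E} (hK : Convex ℝ K) (hK0 : K ∈ 𝓝 0) {a b : ℝ}
    (ha : 0 ≤ a) (hb : 0 < b) :
    ∫ x, exp (-(b * gauge K x ^ 2) / 2) * exp (-(a * ‖x‖ ^ 2) / 2) ∂μ =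
      2 ^ ((finrank ℝ E : ℝ) / 2) * Gamma ((finrank ℝ E : ℝ) / 2 + 1) *
        ∫ x in K, b * (b + a * ‖x‖ ^ 2) ^ (-((finrank ℝ E : ℝ) + 2) / 2) ∂μ := by
  have hgauge : Continuous (gauge K) := continuous_gauge hK hK0
  have hlevel : {x | gauge K x < 1} =ᵐ[μ] K := by
    rw [setOfPred_gauge_lt_one_eq_interior hK hK0]
    exact interior_ae_eq_of_null_frontier (hK.addHaar_frontier μ)
  have hpos (x : E) : 0 < b + a * ‖x‖ ^ 2 := by positivity
  have hcont : Continuous fun x : E => b * (b + a * ‖x‖ ^ 2) ^ (-((finrank ℝ E : ℝ) + 2) / 2) :=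
    continuous_const.mul <| (by fun_prop : Continuous fun x : E => b + a * ‖x‖ ^ 2).rpow_const
      fun x => Or.inl (hpos x).ne'
  rw [integral_eq_lintegral_of_nonneg_ae (ae_of_all _ fun x => by positivity)
      (by fun_prop : Continuous _).aestronglyMeasurable,
    integral_eq_lintegral_of_nonneg_ae (ae_of_all _ fun x => by have := hpos x; positivity)
      hcont.aestronglyMeasurable,
    lintegral_exp_gauge_mul_exp_norm μ hgauge.measurable ha hb, setLIntegral_congr hlevel,
    ENNReal.toReal_mul, ENNReal.toReal_ofReal (by positivity)]

end AddHaar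

theorem volume_closedBall_toReal_mul_two_rpow_mul_Gamma {F : Type*} [NormedAddCommGroup F]
    [InnerProductSpace ℝ F] [FiniteDimensional ℝ F] [MeasurableSpace F] [BorelSpace F] :
    (volume (Metric.closedBall (0 : F) 1)).toReal *
        (2 ^ ((finrank ℝ F : ℝ) / 2) * Gamma ((finrank ℝ F : ℝ) / 2 + 1)) =
      (2 * π) ^ ((finrank ℝ F : ℝ) / 2) := by
  have h := integral_exp_gauge_mul_exp_norm volume (convex_closedBall (0 : F) 1)
    (Metric.closedBall_mem_nhds 0 one_pos) le_rfl one_pos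
  simp only [gauge_closedBall zero_le_one, div_one, one_mul, zero_mul, add_zero, one_rpow,
    neg_zero, zero_div, exp_zero, mul_one, setIntegral_const, smul_eq_mul, measureReal_def] at h
  have hgauss := GaussianFourier.integral_rexp_neg_mul_sq_norm (V := F) (half_pos one_pos)
  rw [show π / (1 / 2) = 2 * π by ring] at hgauss
  rw [← hgauss, mul_comm, ← h]
  congr 1 with x
  ring_nf

theorem integral_exp_gauge_weighted_general (n : ℕ) (K : Set (EuclideanSpace ℝ (Fin n)))
    (hKconv : Convex ℝ K) (hK0 : 0 ∈ interior K)
    (a b : ℝ) (ha : 0 < a) (hb : 0 < b) :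
    (2 * π) ^ (-(n : ℝ) / 2) *
        ∫ x : EuclideanSpace ℝ (Fin n),
          Real.exp (-(b * gauge K x ^ 2) / 2) * Real.exp (-(a * ‖x‖ ^ 2) / 2) =
      (volume (Metric.closedBall (0 : EuclideanSpace ℝ (Fin n)) 1)).toReal⁻¹ *
        ∫ x in K, b * (b + a * ‖x‖ ^ 2) ^ (-((n : ℝ) + 2) / 2) := by
  have hball := volume_closedBall_toReal_mul_two_rpow_mul_Gamma (F := EuclideanSpace ℝ (Fin n))
  rw [integral_exp_gauge_mul_exp_norm volume hKconv (mem_interior_iff_mem_nhds.1 hK0) ha.le hb]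
  simp only [finrank_euclideanSpace_fin] at hball ⊢
  have hC : 2 ^ ((n : ℝ) / 2) * Gamma ((n : ℝ) / 2 + 1) ≠ 0 := by positivity
  rw [neg_div, rpow_neg (by positivity), ← hball, mul_inv, mul_assoc, inv_mul_cancel_left₀ hC]

/-- for a convex body `K` with `0 ∈ int K` and `a, b > 0`,
`(2π)^{−n/2} ∫ e^{−½b‖x‖_K²} e^{−½a|x|²} dx
  = |B₂ⁿ|⁻¹ ∫_K b (b + a|x|²)^{−(n+2)/2} dx`. -/
theorem integral_exp_gauge_weighted (n : ℕ) (K : Set (EuclideanSpace ℝ (Fin n)))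
    (hKconv : Convex ℝ K) (hKcomp : IsCompact K) (hK0 : 0 ∈ interior K)
    (a b : ℝ) (ha : 0 < a) (hb : 0 < b) :
    (2 * π) ^ (-(n : ℝ) / 2) *
        ∫ x : EuclideanSpace ℝ (Fin n),
          Real.exp (-(b * gauge K x ^ 2) / 2) * Real.exp (-(a * ‖x‖ ^ 2) / 2) =
      (volume (Metric.closedBall (0 : EuclideanSpace ℝ (Fin n)) 1)).toReal⁻¹ *
        ∫ x in K, b * (b + a * ‖x‖ ^ 2) ^ (-((n : ℝ) + 2) / 2) :=
  integral_exp_gauge_weighted_general n K hKconv hK0 a b ha hb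
end

section
/- Let β > 0 and γ_β(x) = (2πβ)^{−n/2} e^{−|x|²/(2β)}. For s > 0 and p, q ∈ ℝ∖{0} satisfying (q−1)/(p−1) = e^{2s}, if β_{s,p} := 1 + (β−1)(q/p)e^{−2s} > 0, then ‖P_s[(γ_β/γ)^{1/p}]‖_{L^q(γ)} = β^{n/(2p')} · β_{s,p}^{−n/(2q')}, where 1/p + 1/p' = 1 and 1/q + 1/q' = 1. -/
/-!
Everything stays inside the family of centred Gaussian exponentials `C * exp (-(a/2) * ‖x‖²)`.
The ratio `(γ_β/γ)^(1/p)` is such an exponential with `a = (β⁻¹ - 1)/p`; completing the square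
in the integral defining `P_s` (Mehler's formula) sends `exp (-(a/2) * ‖x‖²)` to
`A^(-n/2) * exp (-(a e^{-2s}/A)/2 * ‖x‖²)` with `A = 1 + a (1 - e^{-2s})`; and the `L^q(γ)` norm
of a Gaussian exponential is one more Gaussian integral. The relation `p - 1 = (q - 1) e^{-2s}`
makes the constants collapse: `β A = β_{s,p}` and `1 + q a e^{-2s}/A = β_{s,p}⁻¹`.
-/

open MeasureTheory Real

/-- Standard Gaussian density on `ℝⁿ`. -/
noncomputable def gaussD (n : ℕ) (x : EuclideanSpace ℝ (Fin n)) : ℝ :=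
  (2 * π) ^ (-(n : ℝ) / 2) * Real.exp (-‖x‖ ^ 2 / 2)

/-- Centered Gaussian density of variance `β` on `ℝⁿ`. -/
noncomputable def gaussV (n : ℕ) (β : ℝ) (x : EuclideanSpace ℝ (Fin n)) : ℝ :=
  (2 * π * β) ^ (-(n : ℝ) / 2) * Real.exp (-‖x‖ ^ 2 / (2 * β))

/-- Ornstein–Uhlenbeck semigroup. -/
noncomputable def OU (n : ℕ) (s : ℝ) (f : EuclideanSpace ℝ (Fin n) → ℝ)
    (x : EuclideanSpace ℝ (Fin n)) : ℝ :=
  ∫ y : EuclideanSpace ℝ (Fin n),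
    f (Real.exp (-s) • x + Real.sqrt (1 - Real.exp (-2 * s)) • y) * gaussD n y

/-- `L^q(γ)` "norm" (also for negative exponents `q`). -/
noncomputable def gaussLq (n : ℕ) (q : ℝ) (g : EuclideanSpace ℝ (Fin n) → ℝ) : ℝ :=
  (∫ x : EuclideanSpace ℝ (Fin n), g x ^ q * gaussD n x) ^ (1 / q)

open scoped RealInnerProductSpace

section InnerProductSpace

variable {V : Type*} [NormedAddCommGroup V] [InnerProductSpace ℝ V] [FiniteDimensional ℝ V]
  [MeasurableSpace V] [BorelSpace V]

theorem integral_rexp_neg_mul_sq_norm_add {b : ℝ} (hb : 0 < b) (c : ℝ) (w : V) :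
    ∫ v : V, rexp (-b * ‖v‖ ^ 2 + c * ⟪w, v⟫) =
      (π / b) ^ (Module.finrank ℝ V / 2 : ℝ) * rexp (c ^ 2 * ‖w‖ ^ 2 / (4 * b)) := by
  have hcomplex := GaussianFourier.integral_cexp_neg_mul_sq_norm_add
    (V := V) (show 0 < (b : ℂ).re from hb) (c : ℂ) w
  rw [← Complex.ofReal_inj, ← integral_complex_ofReal]
  push_cast
  convert hcomplex using 2
  · rw [Complex.ofReal_cpow (by positivity)]
    push_cast
    rfl

end InnerProductSpace

theorem integral_exp_quadratic_mul_gaussD (n : ℕ) {a : ℝ} (ha : 0 < 1 + a) (c : ℝ)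
    (w : EuclideanSpace ℝ (Fin n)) :
    ∫ y : EuclideanSpace ℝ (Fin n), rexp (-(a / 2) * ‖y‖ ^ 2 + c * ⟪w, y⟫) * gaussD n y =
      (1 + a) ^ (-(n : ℝ) / 2) * rexp (c ^ 2 * ‖w‖ ^ 2 / (2 * (1 + a))) := by
  have hmerge : ∀ y : EuclideanSpace ℝ (Fin n),
      rexp (-(a / 2) * ‖y‖ ^ 2 + c * ⟪w, y⟫) * gaussD n y =
        (2 * π) ^ (-(n : ℝ) / 2) * rexp (-((1 + a) / 2) * ‖y‖ ^ 2 + c * ⟪w, y⟫) := by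
    intro y
    rw [gaussD, mul_left_comm, ← Real.exp_add]
    congr 2
    ring
  have hconst : (2 * π) ^ (-(n : ℝ) / 2) * (π / ((1 + a) / 2)) ^ ((n : ℝ) / 2) =
      (1 + a) ^ (-(n : ℝ) / 2) := by
    rw [show π / ((1 + a) / 2) = (2 * π) / (1 + a) by field_simp,
      Real.div_rpow (by positivity) ha.le, mul_div_assoc', ← Real.rpow_add (by positivity),
      neg_div, neg_add_cancel, Real.rpow_zero, one_div, ← Real.rpow_neg ha.le]
  simp_rw [hmerge]
  rw [integral_const_mul, integral_rexp_neg_mul_sq_norm_add (by positivity),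
    finrank_euclideanSpace_fin, ← mul_assoc, hconst]
  ring_nf

theorem OU_const_mul (n : ℕ) (s C : ℝ) (f : EuclideanSpace ℝ (Fin n) → ℝ)
    (x : EuclideanSpace ℝ (Fin n)) :
    OU n s (fun z => C * f z) x = C * OU n s f x := by
  simp only [OU, mul_assoc]
  exact integral_const_mul C _

theorem OU_exp_neg_mul_sq_norm (n : ℕ) {s a : ℝ} (hs : 0 ≤ s)
    (ha : 0 < 1 + a * (1 - rexp (-2 * s))) (x : EuclideanSpace ℝ (Fin n)) :
    OU n s (fun z => rexp (-(a / 2) * ‖z‖ ^ 2)) x =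
      (1 + a * (1 - rexp (-2 * s))) ^ (-(n : ℝ) / 2) *
        rexp (-(a * rexp (-2 * s) / (1 + a * (1 - rexp (-2 * s))) / 2) * ‖x‖ ^ 2) := by
  simp only [OU]
  set u := rexp (-2 * s)
  have hu : u ≤ 1 := Real.exp_le_one_iff.mpr (by linarith)
  have he : rexp (-s) ^ 2 = u := by rw [← Real.exp_nat_mul]; congr 1; ring
  have ht : √(1 - u) ^ 2 = 1 - u := Real.sq_sqrt (by linarith)
  have hsplit : ∀ y : EuclideanSpace ℝ (Fin n),
      rexp (-(a / 2) * ‖rexp (-s) • x + √(1 - u) • y‖ ^ 2) =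
        rexp (-(a * u / 2) * ‖x‖ ^ 2) *
          rexp (-(a * (1 - u) / 2) * ‖y‖ ^ 2 + (-(a * rexp (-s) * √(1 - u))) * ⟪x, y⟫) := by
    intro y
    rw [← Real.exp_add, norm_add_sq_real, norm_smul, norm_smul, real_inner_smul_left,
      real_inner_smul_right, Real.norm_of_nonneg (Real.exp_nonneg _),
      Real.norm_of_nonneg (Real.sqrt_nonneg _), mul_pow, mul_pow, he, ht]
    ring_nf
  simp only [hsplit, mul_assoc]
  rw [integral_const_mul, integral_exp_quadratic_mul_gaussD n ha, mul_left_comm, ← Real.exp_add]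
  congr 2
  rw [neg_sq, mul_pow, mul_pow, he, ht]
  field_simp
  ring

theorem gaussLq_const_mul_exp_neg_mul_sq_norm (n : ℕ) {q C a : ℝ} (hq : q ≠ 0) (hC : 0 < C)
    (ha : 0 < 1 + q * a) :
    gaussLq n q (fun x => C * rexp (-(a / 2) * ‖x‖ ^ 2)) =
      C * (1 + q * a) ^ (-(n : ℝ) / (2 * q)) := by
  have hpow : ∀ x : EuclideanSpace ℝ (Fin n),
      (C * rexp (-(a / 2) * ‖x‖ ^ 2)) ^ q * gaussD n x =
        C ^ q * (rexp (-(q * a / 2) * ‖x‖ ^ 2) * gaussD n x) := by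
    intro x
    rw [Real.mul_rpow hC.le (Real.exp_nonneg _), ← Real.exp_mul, mul_assoc]
    congr 3
    ring
  have hint : ∫ x : EuclideanSpace ℝ (Fin n), rexp (-(q * a / 2) * ‖x‖ ^ 2) * gaussD n x =
      (1 + q * a) ^ (-(n : ℝ) / 2) := by
    simpa using integral_exp_quadratic_mul_gaussD n ha 0 0
  simp only [gaussLq, hpow]
  rw [integral_const_mul, hint, Real.mul_rpow (by positivity) (by positivity),
    ← Real.rpow_mul hC.le, mul_one_div_cancel hq, Real.rpow_one, ← Real.rpow_mul ha.le]
  congr 2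
  ring

theorem gaussV_div_gaussD_rpow (n : ℕ) {β : ℝ} (hβ : 0 < β) (r : ℝ)
    (x : EuclideanSpace ℝ (Fin n)) :
    (gaussV n β x / gaussD n x) ^ r =
      β ^ (-(n : ℝ) * r / 2) * rexp (-(r * (β⁻¹ - 1) / 2) * ‖x‖ ^ 2) := by
  have hratio : gaussV n β x / gaussD n x =
      β ^ (-(n : ℝ) / 2) * rexp (-((β⁻¹ - 1) / 2) * ‖x‖ ^ 2) := by
    have hexp : rexp (-‖x‖ ^ 2 / (2 * β)) =
        rexp (-((β⁻¹ - 1) / 2) * ‖x‖ ^ 2) * rexp (-‖x‖ ^ 2 / 2) := by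
      rw [← Real.exp_add]
      congr 1
      field_simp
      ring
    rw [gaussV, gaussD, Real.mul_rpow (by positivity) hβ.le, div_eq_iff (by positivity), hexp]
    ring
  rw [hratio, Real.mul_rpow (by positivity) (Real.exp_nonneg _), ← Real.rpow_mul hβ.le,
    ← Real.exp_mul]
  congr 2 <;> ring

theorem OU_gaussV_div_gaussD_rpow (n : ℕ) {s β r : ℝ} (hs : 0 ≤ s) (hβ : 0 < β)
    (hA : 0 < 1 + r * (β⁻¹ - 1) * (1 - rexp (-2 * s))) :
    OU n s (fun x => (gaussV n β x / gaussD n x) ^ r) = fun x =>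
      β ^ (-(n : ℝ) * r / 2) * (1 + r * (β⁻¹ - 1) * (1 - rexp (-2 * s))) ^ (-(n : ℝ) / 2) *
        rexp (-(r * (β⁻¹ - 1) * rexp (-2 * s) / (1 + r * (β⁻¹ - 1) * (1 - rexp (-2 * s))) / 2) *
          ‖x‖ ^ 2) := by
  funext x
  simp only [gaussV_div_gaussD_rpow n hβ]
  rw [OU_const_mul, OU_exp_neg_mul_sq_norm n hs hA]
  exact (mul_assoc _ _ _).symm

theorem eq_one_add_mul_exp_neg_of_div_eq_exp {p q s : ℝ}
    (h : (q - 1) / (p - 1) = rexp (2 * s)) : p = 1 + (q - 1) * rexp (-2 * s) := by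
  have hp1 : p - 1 ≠ 0 := by
    rintro hp1
    rw [hp1, div_zero] at h
    exact (Real.exp_pos _).ne' h.symm
  have hexp : rexp (2 * s) * rexp (-2 * s) = 1 := by rw [← Real.exp_add]; simp
  rw [div_eq_iff hp1] at h
  linear_combination (-rexp (-2 * s)) * h - (p - 1) * hexp

theorem rpow_mul_div_rpow_mul_inv_rpow_of_conj {β K p q p' q' : ℝ} (m : ℝ) (hβ : 0 < β)
    (hK : 0 < K) (hp' : 1 / p + 1 / p' = 1) (hq' : 1 / q + 1 / q' = 1) :
    β ^ (-m * (1 / p) / 2) * (K / β) ^ (-m / 2) * K⁻¹ ^ (-m / (2 * q)) =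
      β ^ (m / (2 * p')) * K ^ (-m / (2 * q')) := by
  rw [Real.div_rpow hK.le hβ.le, Real.inv_rpow hK.le, ← Real.rpow_neg hK.le]
  calc β ^ (-m * (1 / p) / 2) * (K ^ (-m / 2) / β ^ (-m / 2)) * K ^ (-(-m / (2 * q)))
      = β ^ (-m * (1 / p) / 2 - -m / 2) * K ^ (-m / 2 + -(-m / (2 * q))) := by
        rw [Real.rpow_sub hβ, Real.rpow_add hK]
        ring
    _ = β ^ (m / (2 * p')) * K ^ (-m / (2 * q')) := by
        congr 2
        · linear_combination (-m / 2) * hp'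
        · linear_combination (m / 2) * hq'

/-- value of the hypercontractivity quantity on centered Gaussians
when `(q−1)/(p−1) = e^{2s}` and `β_{s,p} > 0`. -/
theorem gaussLq_ou_gaussian (n : ℕ) (s β p q p' q' : ℝ) (hs : 0 < s) (hβ : 0 < β)
    (hp : p ≠ 0) (hq : q ≠ 0) (hN : (q - 1) / (p - 1) = Real.exp (2 * s))
    (hp' : 1 / p + 1 / p' = 1) (hq' : 1 / q + 1 / q' = 1)
    (hβsp : 0 < 1 + (β - 1) * (q / p) * Real.exp (-2 * s)) :
    gaussLq n q (OU n s fun x => (gaussV n β x / gaussD n x) ^ (1 / p)) =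
      β ^ ((n : ℝ) / (2 * p')) *
        (1 + (β - 1) * (q / p) * Real.exp (-2 * s)) ^ (-(n : ℝ) / (2 * q')) := by
  have hpu := eq_one_add_mul_exp_neg_of_div_eq_exp hN
  set u := rexp (-2 * s)
  set K := 1 + (β - 1) * (q / p) * u
  set A := 1 + 1 / p * (β⁻¹ - 1) * (1 - u)
  have hKA : K = β * A := by
    simp only [K, A]
    field_simp
    linear_combination (1 - β) * hpu
  have hA : 0 < A := pos_of_mul_pos_right (hKA ▸ hβsp) hβ.le
  have hb : 1 + q * (1 / p * (β⁻¹ - 1) * u / A) = K⁻¹ := by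
    rw [hKA]
    field_simp
    simp only [A]
    field_simp
    linear_combination (β - 1) * hpu
  have hAK : A = K / β := by rw [hKA]; field_simp
  rw [OU_gaussV_div_gaussD_rpow n hs.le hβ hA, gaussLq_const_mul_exp_neg_mul_sq_norm n hq
    (by positivity) (hb ▸ inv_pos.mpr hβsp), hb]
  have hpowers := rpow_mul_div_rpow_mul_inv_rpow_of_conj n hβ hβsp hp' hq'
  rwa [← hAK] at hpowers
end

section
/- Let φ : ℝⁿ → ℝ be concave and suppose Q_1φ(x₀) = φ(y₀) + ½|x₀−y₀|² for some x₀, y₀ ∈ ℝⁿ (i.e., the infimum defining Q_1φ(x₀) is attained at y₀). Then φ is differentiable at y₀ and ∇φ(y₀) = x₀ − y₀. -/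
/-!
Minimality of `y₀` says that `φ` lies above the concave quadratic
`y ↦ φ y₀ + ⟪x₀ - y₀, y - y₀⟫ - ‖y - y₀‖² / 2`, which touches it at `y₀`. Concavity of `φ` at the
midpoint `y₀` of `y` and its reflection `2 y₀ - y` turns this minorant into the symmetric majorant,
so `φ` deviates from the affine map `y ↦ φ y₀ + ⟪x₀ - y₀, y - y₀⟫` by at most `‖y - y₀‖² / 2`.
-/

open Set Asymptotics Filter InnerProductSpace

section Normed

variable {E F : Type*} [NormedAddCommGroup E] [NormedSpace ℝ E]

theorem HasFDerivAt.of_norm_sub_sub_le_mul_sq [NormedAddCommGroup F] [NormedSpace ℝ F]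
    {f : E → F} {f' : E →L[ℝ] F} {x₀ : E} {C : ℝ}
    (h : ∀ y, ‖f y - f x₀ - f' (y - x₀)‖ ≤ C * ‖y - x₀‖ ^ 2) : HasFDerivAt f f' x₀ := by
  rw [hasFDerivAt_iff_isLittleO]
  refine (IsBigO.of_bound C (Eventually.of_forall fun y => ?_)).trans_isLittleO
    (isLittleO_pow_sub_sub x₀ one_lt_two)
  simpa only [norm_pow, norm_norm] using h y

variable {f : E → ℝ} {ℓ : E →L[ℝ] ℝ} {x₀ : E} {C : ℝ}

theorem ConcaveOn.abs_sub_sub_le_of_forall_le (hf : ConcaveOn ℝ univ f)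
    (h : ∀ y, f x₀ + ℓ (y - x₀) - C * ‖y - x₀‖ ^ 2 ≤ f y) (y : E) :
    |f y - f x₀ - ℓ (y - x₀)| ≤ C * ‖y - x₀‖ ^ 2 := by
  have hmid : (1 / 2 : ℝ) • f y + (1 / 2 : ℝ) • f (x₀ - (y - x₀)) ≤ f x₀ := by
    have hx₀ : (1 / 2 : ℝ) • y + (1 / 2 : ℝ) • (x₀ - (y - x₀)) = x₀ := by module
    simpa only [hx₀] using hf.2 (mem_univ y) (mem_univ (x₀ - (y - x₀)))
      (by norm_num : (0 : ℝ) ≤ 1 / 2) (by norm_num : (0 : ℝ) ≤ 1 / 2) (by norm_num)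
  have hreflect := h (x₀ - (y - x₀))
  rw [sub_sub_cancel_left, map_neg, norm_neg] at hreflect
  rw [smul_eq_mul, smul_eq_mul] at hmid
  rw [abs_le]
  constructor <;> linarith [h y]

theorem ConcaveOn.hasFDerivAt_of_forall_le (hf : ConcaveOn ℝ univ f)
    (h : ∀ y, f x₀ + ℓ (y - x₀) - C * ‖y - x₀‖ ^ 2 ≤ f y) : HasFDerivAt f ℓ x₀ :=
  HasFDerivAt.of_norm_sub_sub_le_mul_sq (hf.abs_sub_sub_le_of_forall_le h)

end Normed

theorem ConcaveOn.hasGradientAt_of_isMinOn_add_sq_div_two {E : Type*} [NormedAddCommGroup E]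
    [InnerProductSpace ℝ E] [CompleteSpace E] {f : E → ℝ} (hf : ConcaveOn ℝ univ f) {x₀ y₀ : E}
    (hmin : IsMinOn (fun y => f y + ‖x₀ - y‖ ^ 2 / 2) univ y₀) :
    HasGradientAt f (x₀ - y₀) y₀ := by
  rw [hasGradientAt_iff_hasFDerivAt]
  refine hf.hasFDerivAt_of_forall_le (C := 1 / 2) fun y => ?_
  have hy := isMinOn_univ_iff.1 hmin y
  have hexpand : ‖x₀ - y‖ ^ 2 = ‖x₀ - y₀‖ ^ 2 - 2 * inner ℝ (x₀ - y₀) (y - y₀) + ‖y - y₀‖ ^ 2 := by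
    rw [← norm_sub_sq_real, sub_sub_sub_cancel_right]
  rw [toDual_apply_apply]
  linarith

/-- if `φ` is concave and the infimum defining `Q₁φ(x₀)` is attained
at `y₀`, then `φ` is differentiable at `y₀` with gradient `x₀ − y₀`. -/
theorem gradient_at_hopfLax_argmin (n : ℕ)
    (φ : EuclideanSpace ℝ (Fin n) → ℝ) (hconc : ConcaveOn ℝ Set.univ φ)
    (x₀ y₀ : EuclideanSpace ℝ (Fin n))
    (hmin : ∀ y, φ y₀ + ‖x₀ - y₀‖ ^ 2 / 2 ≤ φ y + ‖x₀ - y‖ ^ 2 / 2) :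
    HasGradientAt φ (x₀ - y₀) y₀ :=
  hconc.hasGradientAt_of_isMinOn_add_sq_div_two (isMinOn_univ_iff.2 hmin)
end

section
/- Let β ≥ 1 and let φ : ℝⁿ → ℝ be concave and −(1−1/β)-semi-convex (i.e., φ(x) + ½(1−1/β)|x|² is convex). Then Q_1φ is continuous on ℝⁿ (both lower and upper semicontinuous). -/
open MeasureTheory Real

open scoped RealInnerProductSpace

/-! Expanding `‖x - y‖² = ‖x‖² - 2⟪x, y⟫ + ‖y‖²` gives
`Q₁φ(x) = ‖x‖²/2 + ⨅ y, (φ y + ‖y‖²/2 - ⟪x, y⟫)`, and the second term is an infimum of affine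
functions of `x`, hence concave, hence continuous as soon as it is finite. Finiteness comes from
semi-convexity: `φ y + ‖y‖²/2` is a convex function plus `‖y‖²/(2β)`, and a convex function
grows at least like `-‖y‖`, so the quadratic term beats the linear term `⟪x, y⟫`. -/

section ConvexLowerBound

variable {E : Type*} [NormedAddCommGroup E] [NormedSpace ℝ E] {f : E → ℝ}

lemma ConvexOn.sub_mul_norm_le (hf : ConvexOn ℝ Set.univ f) {M : ℝ}
    (hM : ∀ u : E, ‖u‖ = 1 → f u ≤ M) (y : E) :
    f 0 - (M - f 0) * ‖y‖ ≤ f y := by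
  rcases eq_or_ne y 0 with rfl | hy
  · simp
  set t := ‖y‖
  have ht : 0 < t := norm_pos_iff.mpr hy
  set u : E := t⁻¹ • y
  have hu : ‖-u‖ = 1 := by
    rw [norm_neg, norm_smul, norm_inv, norm_norm, inv_mul_cancel₀ ht.ne']
  have hzero : (1 / (1 + t)) • y + (t / (1 + t)) • -u = 0 := by
    rw [smul_neg, smul_smul, div_mul_eq_mul_div, mul_inv_cancel₀ ht.ne', add_neg_cancel]
  have hconv : f ((1 / (1 + t)) • y + (t / (1 + t)) • -u)
      ≤ (1 / (1 + t)) • f y + (t / (1 + t)) • f (-u) :=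
    hf.2 trivial trivial (by positivity) (by positivity) (by field_simp)
  rw [hzero, smul_eq_mul, smul_eq_mul] at hconv
  have hcleared : (1 + t) * f 0 ≤ f y + t * f (-u) := by
    have := mul_le_mul_of_nonneg_left hconv (by positivity : (0 : ℝ) ≤ 1 + t)
    field_simp at this
    linarith
  have hMu : t * f (-u) ≤ t * M := mul_le_mul_of_nonneg_left (hM (-u) hu) ht.le
  linarith

lemma ConvexOn.exists_sub_mul_norm_le [FiniteDimensional ℝ E] (hf : ConvexOn ℝ Set.univ f) :
    ∃ a b : ℝ, ∀ y, a - b * ‖y‖ ≤ f y := by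
  obtain ⟨M, hM⟩ := (isCompact_sphere (0 : E) 1).bddAbove_image
    hf.locallyLipschitz.continuous.continuousOn
  exact ⟨f 0, M - f 0, hf.sub_mul_norm_le fun u hu => hM ⟨u, by simpa using hu, rfl⟩⟩

end ConvexLowerBound

lemma ConcaveOn.ciInf {E ι : Type*} [AddCommGroup E] [Module ℝ E] [Nonempty ι] {s : Set E}
    {g : ι → E → ℝ} (hg : ∀ i, ConcaveOn ℝ s (g i))
    (hbdd : ∀ x ∈ s, BddBelow (Set.range fun i => g i x)) :
    ConcaveOn ℝ s fun x => ⨅ i, g i x := by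
  refine ⟨(hg (Classical.arbitrary ι)).1, fun x hx z hz a b ha hb hab => le_ciInf fun i => ?_⟩
  calc a • (⨅ i, g i x) + b • (⨅ i, g i z)
      ≤ a • g i x + b • g i z := by
        gcongr
        · exact ciInf_le (hbdd x hx) i
        · exact ciInf_le (hbdd z hz) i
    _ ≤ g i (a • x + b • z) := (hg i).2 hx hz ha hb hab

section InnerProduct

variable {F : Type*} [NormedAddCommGroup F] [InnerProductSpace ℝ F]

lemma bddBelow_range_sub_inner {h : F → ℝ} {a b ε : ℝ} (hε : 0 < ε)
    (hh : ∀ y, a - b * ‖y‖ + ε / 2 * ‖y‖ ^ 2 ≤ h y) (x : F) :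
    BddBelow (Set.range fun y => h y - ⟪x, y⟫) := by
  refine ⟨a - (b + ‖x‖) ^ 2 / (2 * ε), ?_⟩
  rintro _ ⟨y, rfl⟩
  have hsq : 0 ≤ (ε * ‖y‖ - (b + ‖x‖)) ^ 2 / (2 * ε) := by positivity
  have hexpand : (ε * ‖y‖ - (b + ‖x‖)) ^ 2 / (2 * ε)
      = ε / 2 * ‖y‖ ^ 2 - (b + ‖x‖) * ‖y‖ + (b + ‖x‖) ^ 2 / (2 * ε) := by
    field_simp
    ring
  nlinarith [hh y, real_inner_le_norm x y]

lemma concaveOn_iInf_sub_inner {h : F → ℝ}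
    (hbdd : ∀ x, BddBelow (Set.range fun y => h y - ⟪x, y⟫)) :
    ConcaveOn ℝ Set.univ fun x => ⨅ y, (h y - ⟪x, y⟫) := by
  refine ConcaveOn.ciInf (fun y => ?_) fun x _ => hbdd x
  have : ConcaveOn ℝ Set.univ fun x => h y - ⟪y, x⟫ :=
    (concaveOn_const (h y) convex_univ).sub ((innerₛₗ ℝ y).convexOn convex_univ)
  simpa only [real_inner_comm y] using this

lemma iInf_add_norm_sub_sq_div_two (φ : F → ℝ) (x : F)
    (hbdd : BddBelow (Set.range fun y => φ y + ‖y‖ ^ 2 / 2 - ⟪x, y⟫)) :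
    ⨅ y, (φ y + ‖x - y‖ ^ 2 / 2) = ‖x‖ ^ 2 / 2 + ⨅ y, (φ y + ‖y‖ ^ 2 / 2 - ⟪x, y⟫) := by
  rw [← OrderIso.addLeft_apply (‖x‖ ^ 2 / 2), OrderIso.map_ciInf _ hbdd]
  congr 1 with y
  rw [OrderIso.addLeft_apply, norm_sub_sq_real]
  ring

end InnerProduct

theorem hopfLax_continuous_general (n : ℕ) (β : ℝ) (hβ : 1 ≤ β)
    (φ : EuclideanSpace ℝ (Fin n) → ℝ)
    (hsc : ConvexOn ℝ Set.univ (fun x => φ x + (1 - 1 / β) / 2 * ‖x‖ ^ 2)) :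
    Continuous (fun x : EuclideanSpace ℝ (Fin n) =>
      ⨅ (y : EuclideanSpace ℝ (Fin n)), (φ y + ‖x - y‖ ^ 2 / 2)) := by
  obtain ⟨a, b, hab⟩ := hsc.exists_sub_mul_norm_le
  have hgrowth : ∀ y, a - b * ‖y‖ + 1 / β / 2 * ‖y‖ ^ 2 ≤ φ y + ‖y‖ ^ 2 / 2 := fun y => by
    linarith [hab y]
  have hbdd := bddBelow_range_sub_inner (by positivity) hgrowth
  simp_rw [fun x => iInf_add_norm_sub_sq_div_two φ x (hbdd x)]
  exact ((continuous_norm.pow 2).div_const 2).add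
    (concaveOn_iInf_sub_inner hbdd).locallyLipschitz.continuous

/-- if `β ≥ 1` and `φ : ℝⁿ → ℝ` is concave and `−(1−1/β)`-semi-convex
(i.e. `φ + ½(1−1/β)|·|²` is convex), then the Hopf–Lax infimal convolution
`Q₁φ(x) = inf_y (φ(y) + ½|x−y|²)` is continuous on `ℝⁿ`. -/
theorem hopfLax_continuous (n : ℕ) (β : ℝ) (hβ : 1 ≤ β)
    (φ : EuclideanSpace ℝ (Fin n) → ℝ)
    (hconc : ConcaveOn ℝ Set.univ φ)
    (hsc : ConvexOn ℝ Set.univ (fun x => φ x + (1 - 1 / β) / 2 * ‖x‖ ^ 2)) :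
    Continuous (fun x : EuclideanSpace ℝ (Fin n) =>
      ⨅ (y : EuclideanSpace ℝ (Fin n)), (φ y + ‖x - y‖ ^ 2 / 2)) :=
  hopfLax_continuous_general n β hβ φ hsc
end
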